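/- arXiv:1705.02205 — 2 statements merged into one kernel-verified Lean document; each statement's English description precedes it below -/
import Mathlib

section
/- For every N_E with 0 < N_E < 1/τ_E one has A < −b_E^E/√a_E + (b_I^E/√a_E)·N_I'(N_E) < B, where A := −b_E^E/√a_E + (b_I^E/√a_E) · b_E^I N_I(0)² I(1/τ_E) / (√a_I + b_I^I N_I(1/τ_E)² I(0)) and B := −b_E^E/√a_E + (b_I^E/√a_E) · b_E^I N_I(1/τ_E)² I(0) / (√a_I + b_I^I N_I(0)² I(1/τ_E)). -/
/-- K(w_R, w_F) := ∫_0^∞ (e^{-s²/2}/s)(e^{s·w_F} − e^{s·w_R}) ds (Lebesgue integral on (0,∞)). -/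
noncomputable def K (wR wF : ℝ) : ℝ :=
  ∫ s in Set.Ioi (0 : ℝ), Real.exp (-s ^ 2 / 2) / s * (Real.exp (s * wF) - Real.exp (s * wR))

/-- I₂(N_E,N_I) with V_0^I(N_E,N_I) := b_E^I N_E − b_I^I N_I + (b_E^I − b_E^E) ν_{E,ext}. -/
noncomputable def I2 (VR VF bEE bEI bII aI ν NE NI : ℝ) : ℝ :=
  K ((VR - (bEI * NE - bII * NI + (bEI - bEE) * ν)) / Real.sqrt aI)
    ((VF - (bEI * NE - bII * NI + (bEI - bEE) * ν)) / Real.sqrt aI)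

/-- I(N_E) := ∫_0^∞ e^{-s²/2} · exp(−(b_E^I N_E − b_I^I N_I(N_E) + (b_E^I − b_E^E)ν)s/√a_I)
· (e^{s V_F/√a_I} − e^{s V_R/√a_I}) ds, where N_I(·) is the implicitly defined function. -/
noncomputable def Ifun (VR VF bEE bEI bII aI ν : ℝ) (NIfun : ℝ → ℝ) (NE : ℝ) : ℝ :=
  ∫ s in Set.Ioi (0 : ℝ),
    Real.exp (-s ^ 2 / 2) *
      Real.exp (-((bEI * NE - bII * NIfun NE + (bEI - bEE) * ν) * s) / Real.sqrt aI) *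
      (Real.exp (s * VF / Real.sqrt aI) - Real.exp (s * VR / Real.sqrt aI))

/-- N_I'(N_E) = b_E^I N_I(N_E)² I(N_E)/(√a_I + b_I^I N_I(N_E)² I(N_E)). -/
noncomputable def NIderiv (VR VF bEE bEI bII aI ν : ℝ) (NIfun : ℝ → ℝ) (NE : ℝ) : ℝ :=
  bEI * (NIfun NE) ^ 2 * Ifun VR VF bEE bEI bII aI ν NIfun NE /
    (Real.sqrt aI + bII * (NIfun NE) ^ 2 * Ifun VR VF bEE bEI bII aI ν NIfun NE)

open MeasureTheory Set Real

/-!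
Write `V₀ = V_0^I(N_E, N_I(N_E))`. Both `I₂` and `I` have the form
`∫₀^∞ ρ(s) (e^{s (V_F - V₀)/√a_I} - e^{s (V_R - V₀)/√a_I}) ds` with `ρ > 0`, so both strictly
decrease in `V₀`. For `x < y`, if `N_I(y) ≤ N_I(x)` then `V₀` is larger at `y`, so `I₂` is smaller
and `N_I = 1/(τ_I + I₂)` larger, a contradiction; hence `N_I` increases, and then so does `V₀`, as
otherwise `I₂` would not drop. So on `0 < N_E < 1/τ_E` we have `N_I(0) < N_I(N_E) < N_I(1/τ_E)` and
`I(1/τ_E) < I(N_E) < I(0)`, and the bounds follow because `(P, R) ↦ b_E^I P / (√a_I + b_I^I R)`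
increases in `P` and decreases in `R`.
-/

lemma exp_sub_exp_le_sub_mul_exp {x y : ℝ} : exp x - exp y ≤ (x - y) * exp x := by
  have h := add_one_le_exp (y - x)
  have hxy : exp x * exp (y - x) = exp y := by rw [← exp_add]; ring_nf
  nlinarith [exp_pos x]

lemma exp_sub_sub_exp_sub_lt {a b d : ℝ} (hba : b < a) (hd : 0 < d) :
    exp (a - d) - exp (b - d) < exp a - exp b := by
  have hfactor : exp (a - d) - exp (b - d) = exp (-d) * (exp a - exp b) := by
    simp only [mul_sub, ← exp_add]; ring_nf
  rw [hfactor]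
  exact mul_lt_of_lt_one_left (sub_pos.2 (exp_lt_exp.2 hba)) (exp_lt_one_iff.2 (neg_neg_of_pos hd))

lemma integrable_exp_neg_sq_div_two_mul_exp (r : ℝ) :
    Integrable fun s : ℝ => exp (-s ^ 2 / 2) * exp (r * s) := by
  have hsq : (fun s : ℝ => exp (-s ^ 2 / 2) * exp (r * s)) =
      fun s => exp (r ^ 2 / 2) * exp (-(1 / 2) * (s - r) ^ 2) := by
    funext s; rw [← exp_add, ← exp_add]; ring_nf
  rw [hsq]
  exact ((integrable_exp_neg_mul_sq (by norm_num)).comp_sub_right r).const_mul _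

lemma setIntegral_lt_setIntegral_of_forall_lt {X : Type*} [MeasurableSpace X] {μ : Measure X}
    {s : Set X} {f g : X → ℝ} (hs : MeasurableSet s) (hμ : μ s ≠ 0)
    (hf : IntegrableOn f s μ) (hg : IntegrableOn g s μ) (hlt : ∀ x ∈ s, f x < g x) :
    ∫ x in s, f x ∂μ < ∫ x in s, g x ∂μ := by
  rw [← sub_pos, ← integral_sub hg hf,
    setIntegral_pos_iff_support_of_nonneg_ae (f := fun x => g x - f x) ?_ (hg.sub hf)]
  · refine pos_iff_ne_zero.2 fun h0 => hμ (measure_mono_null (fun x hx => ?_) h0)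
    exact ⟨(sub_pos.2 (hlt x hx)).ne', hx⟩
  · filter_upwards [ae_restrict_mem hs] with x hx using (sub_pos.2 (hlt x hx)).le

/-- `I₂` is the case `ρ(s) = e^{-s²/2}/s` and `I` the case `ρ(s) = e^{-s²/2}`, both at
`v = V_0^I` and `σ = √a_I`. -/
noncomputable def expDiffTransform (ρ : ℝ → ℝ) (σ VR VF v : ℝ) : ℝ :=
  ∫ s in Ioi 0, ρ s * (exp (s * ((VF - v) / σ)) - exp (s * ((VR - v) / σ)))

section expDiffTransform

variable {ρ : ℝ → ℝ} {σ VR VF : ℝ}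

lemma expDiffTransform_pos (hρ : ∀ s ∈ Ioi (0 : ℝ), 0 < ρ s) (hσ : 0 < σ) (hV : VR < VF) (v : ℝ)
    (hi : IntegrableOn (fun s => ρ s * (exp (s * ((VF - v) / σ)) - exp (s * ((VR - v) / σ))))
      (Ioi 0)) :
    0 < expDiffTransform ρ σ VR VF v := by
  have hlt := setIntegral_lt_setIntegral_of_forall_lt measurableSet_Ioi (by simp)
    integrableOn_zero hi fun s (hs : 0 < s) => mul_pos (hρ s hs) <| sub_pos.2 <| exp_lt_exp.2 <|
      mul_lt_mul_of_pos_left (by gcongr) hs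
  rw [expDiffTransform]
  simpa using hlt

lemma expDiffTransform_strictAnti (hρ : ∀ s ∈ Ioi (0 : ℝ), 0 < ρ s) (hσ : 0 < σ) (hV : VR < VF)
    (hi : ∀ v, IntegrableOn
      (fun s => ρ s * (exp (s * ((VF - v) / σ)) - exp (s * ((VR - v) / σ)))) (Ioi 0)) :
    StrictAnti (expDiffTransform ρ σ VR VF) := by
  intro v₁ v₂ hv
  refine setIntegral_lt_setIntegral_of_forall_lt measurableSet_Ioi (by simp) (hi v₂) (hi v₁)
    fun s (hs : 0 < s) => mul_lt_mul_of_pos_left ?_ (hρ s hs)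
  have hshift := exp_sub_sub_exp_sub_lt (a := s * ((VF - v₁) / σ)) (b := s * ((VR - v₁) / σ))
    (d := s * ((v₂ - v₁) / σ)) (mul_lt_mul_of_pos_left (by gcongr) hs)
    (mul_pos hs (div_pos (sub_pos.2 hv) hσ))
  have hsplit : ∀ V, s * ((V - v₂) / σ) = s * ((V - v₁) / σ) - s * ((v₂ - v₁) / σ) :=
    fun V => by ring
  rwa [hsplit, hsplit]

end expDiffTransform

lemma integrableOn_exp_neg_sq_div_two_div_mul_exp_sub_exp {wR wF : ℝ} (h : wR ≤ wF) :
    IntegrableOn (fun s => exp (-s ^ 2 / 2) / s * (exp (s * wF) - exp (s * wR))) (Ioi 0) := by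
  refine ((integrable_exp_neg_sq_div_two_mul_exp wF).const_mul (wF - wR)).integrableOn.mono'
    (by fun_prop) ?_
  filter_upwards [ae_restrict_mem measurableSet_Ioi] with s (hs : 0 < s)
  have hdiff : 0 ≤ exp (s * wF) - exp (s * wR) :=
    sub_nonneg.2 (exp_le_exp.2 (mul_le_mul_of_nonneg_left h hs.le))
  rw [norm_of_nonneg (by positivity)]
  calc exp (-s ^ 2 / 2) / s * (exp (s * wF) - exp (s * wR))
      ≤ exp (-s ^ 2 / 2) / s * ((s * wF - s * wR) * exp (s * wF)) := by
        gcongr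
        exact exp_sub_exp_le_sub_mul_exp
    _ = (wF - wR) * (exp (-s ^ 2 / 2) * exp (wF * s)) := by field_simp

lemma integrable_exp_neg_sq_div_two_mul_exp_sub_exp (wR wF : ℝ) :
    Integrable fun s => exp (-s ^ 2 / 2) * (exp (s * wF) - exp (s * wR)) := by
  simp_rw [mul_sub, mul_comm _ wF, mul_comm _ wR]
  exact (integrable_exp_neg_sq_div_two_mul_exp wF).sub (integrable_exp_neg_sq_div_two_mul_exp wR)

lemma Ifun_eq_expDiffTransform (VR VF bEE bEI bII aI ν : ℝ) (NIfun : ℝ → ℝ) (NE : ℝ) :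
    Ifun VR VF bEE bEI bII aI ν NIfun NE = expDiffTransform (fun s => exp (-s ^ 2 / 2)) (√aI)
      VR VF (bEI * NE - bII * NIfun NE + (bEI - bEE) * ν) := by
  refine setIntegral_congr_fun measurableSet_Ioi fun s _ => ?_
  simp only [mul_sub, ← exp_add]
  ring_nf

lemma strictMonoOn_of_mul_comp_eq_one {S : Set ℝ} {N G : ℝ → ℝ} {a b c : ℝ} (ha : 0 < a)
    (hb : 0 ≤ b) (hG : StrictAnti G) (hN : ∀ x ∈ S, 0 < N x ∧ N x * G (a * x - b * N x + c) = 1) :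
    StrictMonoOn N S ∧ StrictMonoOn (fun x => a * x - b * N x + c) S := by
  have hGpos : ∀ x ∈ S, 0 < G (a * x - b * N x + c) := fun x hx =>
    pos_of_mul_pos_right ((hN x hx).2 ▸ one_pos) (hN x hx).1.le
  have hNinv : ∀ x ∈ S, N x = (G (a * x - b * N x + c))⁻¹ := fun x hx =>
    eq_inv_of_mul_eq_one_left (hN x hx).2
  have hNmono : StrictMonoOn N S := by
    intro x hx y hy hxy
    by_contra! hle
    have hGlt : G (a * y - b * N y + c) < G (a * x - b * N x + c) := hG (by nlinarith)
    rw [hNinv x hx, hNinv y hy, inv_le_inv₀ (hGpos y hy) (hGpos x hx)] at hle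
    exact hGlt.not_ge hle
  refine ⟨hNmono, fun x hx y hy hxy => ?_⟩
  by_contra! hle
  have hNxy := hNmono hx hy hxy
  rw [hNinv x hx, hNinv y hy, inv_lt_inv₀ (hGpos x hx) (hGpos y hy)] at hNxy
  exact (hG.antitone hle).not_gt hNxy

lemma div_add_mul_bounds {a b σ N₀ N N₁ I₀ I I₁ : ℝ} (ha : 0 < a) (hb : 0 ≤ b) (hσ : 0 < σ)
    (hN₀ : 0 < N₀) (hN₀N : N₀ < N) (hNN₁ : N < N₁) (hI₁ : 0 < I₁) (hI₁I : I₁ < I) (hII₀ : I < I₀) :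
    a * N₀ ^ 2 * I₁ / (σ + b * N₁ ^ 2 * I₀) < a * N ^ 2 * I / (σ + b * N ^ 2 * I) ∧
      a * N ^ 2 * I / (σ + b * N ^ 2 * I) < a * N₁ ^ 2 * I₀ / (σ + b * N₀ ^ 2 * I₁) := by
  have hN : 0 < N := hN₀.trans hN₀N
  have hN₁ : 0 < N₁ := hN.trans hNN₁
  have hI : 0 < I := hI₁.trans hI₁I
  have hI₀ : 0 < I₀ := hI.trans hII₀
  constructor
  · calc a * N₀ ^ 2 * I₁ / (σ + b * N₁ ^ 2 * I₀) < a * N ^ 2 * I / (σ + b * N₁ ^ 2 * I₀) := by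
          gcongr
      _ ≤ a * N ^ 2 * I / (σ + b * N ^ 2 * I) := by gcongr
  · calc a * N ^ 2 * I / (σ + b * N ^ 2 * I) < a * N₁ ^ 2 * I₀ / (σ + b * N ^ 2 * I) := by gcongr
      _ ≤ a * N₁ ^ 2 * I₀ / (σ + b * N₀ ^ 2 * I₁) := by gcongr

theorem A_lt_deriv_term_lt_B_general (VR VF bEE bIE bEI bII τE τI aE aI ν : ℝ)
    (hV : VR < VF) (hbIE : 0 < bIE) (hbEI : 0 < bEI) (hbII : 0 < bII)
    (haE : 0 < aE) (haI : 0 < aI)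
    (NIfun : ℝ → ℝ)
    (hNIfun : ∀ NE : ℝ, 0 ≤ NE → NIfun NE ∈ Set.Ioo 0 (1 / τI) ∧
      NIfun NE * (τI + I2 VR VF bEE bEI bII aI ν NE (NIfun NE)) = 1) :
    ∀ NE ∈ Set.Ioo (0 : ℝ) (1 / τE),
      (-(bEE / Real.sqrt aE) + bIE / Real.sqrt aE *
          (bEI * (NIfun 0) ^ 2 * Ifun VR VF bEE bEI bII aI ν NIfun (1 / τE) /
            (Real.sqrt aI + bII * (NIfun (1 / τE)) ^ 2 * Ifun VR VF bEE bEI bII aI ν NIfun 0)) <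
        -(bEE / Real.sqrt aE) + bIE / Real.sqrt aE * NIderiv VR VF bEE bEI bII aI ν NIfun NE) ∧
      (-(bEE / Real.sqrt aE) + bIE / Real.sqrt aE * NIderiv VR VF bEE bEI bII aI ν NIfun NE <
        -(bEE / Real.sqrt aE) + bIE / Real.sqrt aE *
          (bEI * (NIfun (1 / τE)) ^ 2 * Ifun VR VF bEE bEI bII aI ν NIfun 0 /
            (Real.sqrt aI + bII * (NIfun 0) ^ 2 * Ifun VR VF bEE bEI bII aI ν NIfun (1 / τE)))) := by
  rintro NE ⟨hNE₀, hNE₁⟩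
  have hσ : 0 < √aI := sqrt_pos.2 haI
  have hI2 : StrictAnti (expDiffTransform (fun s => exp (-s ^ 2 / 2) / s) (√aI) VR VF) :=
    expDiffTransform_strictAnti (fun s (hs : 0 < s) => by positivity) hσ hV fun v =>
      integrableOn_exp_neg_sq_div_two_div_mul_exp_sub_exp (by gcongr)
  obtain ⟨hNI, hV₀⟩ := strictMonoOn_of_mul_comp_eq_one (S := Ici 0) hbEI hbII.le
    (G := fun v => τI + expDiffTransform (fun s => exp (-s ^ 2 / 2) / s) (√aI) VR VF v)
    (hI2.const_add τI) fun x hx => ⟨(hNIfun x hx).1.1, (hNIfun x hx).2⟩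
  have hI : StrictAnti (expDiffTransform (fun s => exp (-s ^ 2 / 2)) (√aI) VR VF) :=
    expDiffTransform_strictAnti (fun s _ => exp_pos _) hσ hV fun v =>
      (integrable_exp_neg_sq_div_two_mul_exp_sub_exp _ _).integrableOn
  have hIfun : ∀ x y : ℝ, 0 ≤ x → x < y →
      Ifun VR VF bEE bEI bII aI ν NIfun y < Ifun VR VF bEE bEI bII aI ν NIfun x := by
    intro x y hx hxy
    simp only [Ifun_eq_expDiffTransform]
    exact hI (hV₀ (mem_Ici.2 hx) (mem_Ici.2 (hx.trans hxy.le)) hxy)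
  have hIpos : 0 < Ifun VR VF bEE bEI bII aI ν NIfun (1 / τE) := by
    rw [Ifun_eq_expDiffTransform]
    exact expDiffTransform_pos (fun s _ => exp_pos _) hσ hV _
      (integrable_exp_neg_sq_div_two_mul_exp_sub_exp _ _).integrableOn
  obtain ⟨hA, hB⟩ := div_add_mul_bounds hbEI hbII.le hσ (hNIfun 0 le_rfl).1.1
    (hNI (mem_Ici.2 le_rfl) (mem_Ici.2 hNE₀.le) hNE₀)
    (hNI (mem_Ici.2 hNE₀.le) (mem_Ici.2 (hNE₀.trans hNE₁).le) hNE₁) hIpos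
    (hIfun NE _ hNE₀.le hNE₁) (hIfun 0 NE le_rfl hNE₀)
  exact ⟨by unfold NIderiv; gcongr, by unfold NIderiv; gcongr⟩

theorem A_lt_deriv_term_lt_B (VR VF bEE bIE bEI bII τE τI aE aI ν : ℝ)
    (hV : VR < VF) (hbEE : 0 < bEE) (hbIE : 0 < bIE) (hbEI : 0 < bEI) (hbII : 0 < bII)
    (hτE : 0 < τE) (hτI : 0 < τI) (haE : 0 < aE) (haI : 0 < aI) (hν : 0 ≤ ν)
    (NIfun : ℝ → ℝ)
    (hNIfun : ∀ NE : ℝ, 0 ≤ NE → NIfun NE ∈ Set.Ioo 0 (1 / τI) ∧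
      NIfun NE * (τI + I2 VR VF bEE bEI bII aI ν NE (NIfun NE)) = 1) :
    ∀ NE ∈ Set.Ioo (0 : ℝ) (1 / τE),
      (-(bEE / Real.sqrt aE) + bIE / Real.sqrt aE *
          (bEI * (NIfun 0) ^ 2 * Ifun VR VF bEE bEI bII aI ν NIfun (1 / τE) /
            (Real.sqrt aI + bII * (NIfun (1 / τE)) ^ 2 * Ifun VR VF bEE bEI bII aI ν NIfun 0)) <
        -(bEE / Real.sqrt aE) + bIE / Real.sqrt aE * NIderiv VR VF bEE bEI bII aI ν NIfun NE) ∧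
      (-(bEE / Real.sqrt aE) + bIE / Real.sqrt aE * NIderiv VR VF bEE bEI bII aI ν NIfun NE <
        -(bEE / Real.sqrt aE) + bIE / Real.sqrt aE *
          (bEI * (NIfun (1 / τE)) ^ 2 * Ifun VR VF bEE bEI bII aI ν NIfun 0 /
            (Real.sqrt aI + bII * (NIfun 0) ^ 2 * Ifun VR VF bEE bEI bII aI ν NIfun (1 / τE)))) :=
  A_lt_deriv_term_lt_B_general VR VF bEE bIE bEI bII τE τI aE aI ν hV hbIE hbEI hbII haE haI NIfun
    hNIfun
end

section
/- If A ≥ 0, where A := −b_E^E/√a_E + (b_I^E/√a_E) · b_E^I N_I(0)² I(1/τ_E) / (√a_I + b_I^I N_I(1/τ_E)² I(0)), then F(N_E) := N_E(τ_E + I_1(N_E,N_I(N_E))) is strictly increasing on (0,1/τ_E), and consequently the steady-state system N_E(τ_E + I_1(N_E,N_I)) = 1, N_I(τ_I + I_2(N_E,N_I)) = 1 (with 0 < N_E < 1/τ_E, 0 < N_I < 1/τ_I) has exactly one solution. In particular this holds when the product b_E^I·b_I^E is large enough or b_I^I is small enough in comparison with the remaining parameters. -/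
/-- I₁(N_E,N_I) with V_0^E(N_E,N_I) := b_E^E N_E − b_I^E N_I + (b_E^E − b_E^E) ν_{E,ext}. -/
noncomputable def I1 (VR VF bEE bIE aE ν NE NI : ℝ) : ℝ :=
  K ((VR - (bEE * NE - bIE * NI + (bEE - bEE) * ν)) / Real.sqrt aE)
    ((VF - (bEE * NE - bIE * NI + (bEE - bEE) * ν)) / Real.sqrt aE)

open MeasureTheory Set Real

/-- `M r f` is the derivative of `δ ↦ K (r + δ) (f + δ)` at `δ = 0`. -/
noncomputable def M (r f : ℝ) : ℝ :=
  ∫ s in Ioi (0 : ℝ), exp (-s ^ 2 / 2) * (exp (s * f) - exp (s * r))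

lemma exp_sub_exp_le_mul_exp (a b : ℝ) : exp b - exp a ≤ (b - a) * exp b := by
  have h : exp a = exp b * exp (a - b) := by rw [← exp_add]; ring_nf
  nlinarith [add_one_le_exp (a - b), exp_pos b]

lemma integrableOn_exp_neg_sq_div_two_add_mul (b : ℝ) :
    IntegrableOn (fun s : ℝ => exp (-s ^ 2 / 2 + s * b)) (Ioi 0) := by
  have h := ((integrable_exp_neg_mul_sq (by norm_num : (0 : ℝ) < 1 / 2)).comp_sub_right b).const_mul
    (exp (b ^ 2 / 2))
  refine Integrable.integrableOn ?_
  convert h using 2 with s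
  rw [← exp_add]
  ring_nf

lemma integrableOn_M_integrand (r f : ℝ) :
    IntegrableOn (fun s : ℝ => exp (-s ^ 2 / 2) * (exp (s * f) - exp (s * r))) (Ioi 0) := by
  simp_rw [mul_sub, ← exp_add]
  exact (integrableOn_exp_neg_sq_div_two_add_mul f).sub (integrableOn_exp_neg_sq_div_two_add_mul r)

lemma integrableOn_K_integrand {r f : ℝ} (h : r ≤ f) :
    IntegrableOn (fun s : ℝ => exp (-s ^ 2 / 2) / s * (exp (s * f) - exp (s * r))) (Ioi 0) := by
  refine ((integrableOn_exp_neg_sq_div_two_add_mul f).const_mul (f - r)).mono'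
    (by fun_prop) ((ae_restrict_iff' measurableSet_Ioi).2 (ae_of_all _ fun s (hs : 0 < s) => ?_))
  have hsub : 0 ≤ exp (s * f) - exp (s * r) :=
    sub_nonneg.2 (exp_le_exp.2 (mul_le_mul_of_nonneg_left h hs.le))
  rw [norm_of_nonneg (by positivity), exp_add, div_mul_eq_mul_div, div_le_iff₀ hs]
  calc exp (-s ^ 2 / 2) * (exp (s * f) - exp (s * r))
      ≤ exp (-s ^ 2 / 2) * ((s * f - s * r) * exp (s * f)) := by
        gcongr; exact exp_sub_exp_le_mul_exp _ _
    _ = (f - r) * (exp (-s ^ 2 / 2) * exp (s * f)) * s := by ring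

lemma setIntegral_Ioi_pos {f : ℝ → ℝ} {a : ℝ} (hf : IntegrableOn f (Ioi a))
    (hpos : ∀ s ∈ Ioi a, 0 < f s) : 0 < ∫ s in Ioi a, f s := by
  rw [setIntegral_pos_iff_support_of_nonneg_ae
    (ae_restrict_of_forall_mem measurableSet_Ioi fun s hs => (hpos s hs).le) hf,
    inter_eq_self_of_subset_right
      (show Ioi a ⊆ Function.support f from fun s hs => (hpos s hs).ne')]
  simp

lemma K_pos {r f : ℝ} (h : r < f) : 0 < K r f :=
  setIntegral_Ioi_pos (integrableOn_K_integrand h.le) fun s (hs : 0 < s) =>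
    mul_pos (div_pos (exp_pos _) hs) (sub_pos.2 (exp_lt_exp.2 (mul_lt_mul_of_pos_left h hs)))

lemma M_nonneg {r f : ℝ} (h : r ≤ f) : 0 ≤ M r f :=
  setIntegral_nonneg measurableSet_Ioi fun s (hs : 0 < s) =>
    mul_nonneg (exp_pos _).le (sub_nonneg.2 (exp_le_exp.2 (mul_le_mul_of_nonneg_left h hs.le)))

lemma mul_M_le_K_add_sub_K {r f : ℝ} (h : r ≤ f) (δ : ℝ) :
    δ * M r f ≤ K (r + δ) (f + δ) - K r f := by
  rw [K, K, M, ← integral_sub (integrableOn_K_integrand (by linarith)) (integrableOn_K_integrand h),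
    ← integral_const_mul]
  refine setIntegral_mono_on ((integrableOn_M_integrand r f).const_mul δ)
    ((integrableOn_K_integrand (by linarith)).sub (integrableOn_K_integrand h)) measurableSet_Ioi
    fun s (hs : 0 < s) => ?_
  have hsub : 0 ≤ exp (s * f) - exp (s * r) :=
    sub_nonneg.2 (exp_le_exp.2 (mul_le_mul_of_nonneg_left h hs.le))
  have hshift : exp (s * (f + δ)) - exp (s * (r + δ)) - (exp (s * f) - exp (s * r)) =
      (exp (s * f) - exp (s * r)) * (exp (s * δ) - 1) := by
    simp only [mul_add, exp_add]; ring
  rw [← mul_sub, hshift, div_mul_eq_mul_div, le_div_iff₀ hs]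
  calc δ * (exp (-s ^ 2 / 2) * (exp (s * f) - exp (s * r))) * s
      = exp (-s ^ 2 / 2) * ((exp (s * f) - exp (s * r)) * (s * δ)) := by ring
    _ ≤ exp (-s ^ 2 / 2) * ((exp (s * f) - exp (s * r)) * (exp (s * δ) - 1)) := by
        gcongr; linarith [add_one_le_exp (s * δ)]

lemma monotone_of_subgradient {f g : ℝ → ℝ} (h : ∀ x y, g y * (x - y) ≤ f x - f y) :
    Monotone g := by
  intro x y hxy
  rcases hxy.eq_or_lt with rfl | hlt
  · rfl
  · nlinarith [h x y, h y x]

lemma convexOn_univ_of_subgradient {f g : ℝ → ℝ} (h : ∀ x y, g y * (x - y) ≤ f x - f y) :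
    ConvexOn ℝ univ f := by
  refine ⟨convex_univ, fun x _ y _ a b ha hb hab => ?_⟩
  have hx := mul_le_mul_of_nonneg_left (h x (a • x + b • y)) ha
  have hy := mul_le_mul_of_nonneg_left (h y (a • x + b • y)) hb
  simp only [smul_eq_mul] at hx hy ⊢
  have hb' : b = 1 - a := by linarith
  subst hb'
  nlinarith

/-- `K` and `M` as functions of the mean potential `V`, for thresholds `VR`, `VF` and noise
scale `σ = √a`. -/
noncomputable def KV (VR VF σ V : ℝ) : ℝ := K ((VR - V) / σ) ((VF - V) / σ)

noncomputable def MV (VR VF σ V : ℝ) : ℝ := M ((VR - V) / σ) ((VF - V) / σ)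

section Potential

variable {VR VF σ : ℝ}

lemma KV_pos (h : VR < VF) (hσ : 0 < σ) (V : ℝ) : 0 < KV VR VF σ V :=
  K_pos (by gcongr)

lemma MV_nonneg (h : VR ≤ VF) (hσ : 0 < σ) (V : ℝ) : 0 ≤ MV VR VF σ V :=
  M_nonneg (by gcongr)

lemma sub_div_mul_MV_le_KV_sub_KV (h : VR ≤ VF) (hσ : 0 < σ) (V W : ℝ) :
    (W - V) / σ * MV VR VF σ W ≤ KV VR VF σ V - KV VR VF σ W := by
  have hshift : ∀ U, (U - V) / σ = (U - W) / σ + (W - V) / σ := fun U => by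
    rw [← add_div]; ring_nf
  rw [KV, KV, MV, hshift VR, hshift VF]
  exact mul_M_le_K_add_sub_K (by gcongr) _

lemma KV_subgradient (h : VR ≤ VF) (hσ : 0 < σ) (V W : ℝ) :
    -MV VR VF σ W / σ * (V - W) ≤ KV VR VF σ V - KV VR VF σ W := by
  convert sub_div_mul_MV_le_KV_sub_KV h hσ V W using 1
  ring

lemma MV_antitone (h : VR ≤ VF) (hσ : 0 < σ) : Antitone (MV VR VF σ) := by
  intro V W hVW
  have := monotone_of_subgradient (KV_subgradient h hσ) hVW
  rw [div_le_div_iff_of_pos_right hσ] at this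
  linarith

lemma KV_antitone (h : VR ≤ VF) (hσ : 0 < σ) : Antitone (KV VR VF σ) := fun V W hVW => by
  have := sub_div_mul_MV_le_KV_sub_KV h hσ V W
  have : 0 ≤ (W - V) / σ * MV VR VF σ W :=
    mul_nonneg (div_nonneg (sub_nonneg.2 hVW) hσ.le) (MV_nonneg h hσ W)
  linarith

lemma KV_continuous (h : VR ≤ VF) (hσ : 0 < σ) : Continuous (KV VR VF σ) :=
  (convexOn_univ_of_subgradient (KV_subgradient h hσ)).locallyLipschitz.continuous

end Potential

lemma Ifun_eq_MV (VR VF bEE bEI bII aI ν : ℝ) (NIfun : ℝ → ℝ) (NE : ℝ) (haI : 0 < aI) :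
    Ifun VR VF bEE bEI bII aI ν NIfun NE =
      MV VR VF (√aI) (bEI * NE - bII * NIfun NE + (bEI - bEE) * ν) := by
  have hσ : √aI ≠ 0 := (sqrt_pos.2 haI).ne'
  refine setIntegral_congr_fun measurableSet_Ioi fun s _ => ?_
  simp only [mul_sub, ← exp_add]
  congr 2 <;> field_simp <;> ring

/-- In the theorem `n` is `N_I(·)`, `x` is `N_E`, `a x - b n x + c` is `V_0^I` and `Φ` is `I₂` as a
function of `V_0^I`. -/
def IsSteadyRate (Φ : ℝ → ℝ) (τ a b c : ℝ) (n : ℝ → ℝ) : Prop :=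
  ∀ x, 0 ≤ x → 0 < n x ∧ n x * (τ + Φ (a * x - b * n x + c)) = 1

lemma steady_rate_le_and_potential_le {Φ : ℝ → ℝ} (hΦ : Antitone Φ) {τ a b c x₁ x₂ m₁ m₂ : ℝ}
    (ha : 0 ≤ a) (hb : 0 ≤ b) (hx : x₁ ≤ x₂) (hm₁ : 0 < m₁) (hm₂ : 0 < m₂)
    (h₁ : m₁ * (τ + Φ (a * x₁ - b * m₁ + c)) = 1) (h₂ : m₂ * (τ + Φ (a * x₂ - b * m₂ + c)) = 1) :
    m₁ ≤ m₂ ∧ a * x₁ - b * m₁ + c ≤ a * x₂ - b * m₂ + c := by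
  set w₁ := a * x₁ - b * m₁ + c
  set w₂ := a * x₂ - b * m₂ + c
  have e₁ : Φ w₁ = 1 / m₁ - τ := by field_simp; linarith
  have e₂ : Φ w₂ = 1 / m₂ - τ := by field_simp; linarith
  have hm : m₁ ≤ m₂ := by
    rcases le_total m₁ m₂ with hle | hle
    · exact hle
    · have := hΦ (show w₁ ≤ w₂ by nlinarith)
      rwa [e₁, e₂, sub_le_sub_iff_right, one_div_le_one_div hm₂ hm₁] at this
  refine ⟨hm, ?_⟩
  rcases le_total w₁ w₂ with hle | hle
  · exact hle
  · have := hΦ hle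
    rw [e₁, e₂, sub_le_sub_iff_right, one_div_le_one_div hm₁ hm₂] at this
    nlinarith

namespace IsSteadyRate

variable {Φ : ℝ → ℝ} {VR VF σ τ a b c : ℝ} {n : ℝ → ℝ}

lemma le_and_potential_le (hn : IsSteadyRate Φ τ a b c n) (hΦ : Antitone Φ) (ha : 0 ≤ a)
    (hb : 0 ≤ b) {x y : ℝ} (hx : 0 ≤ x) (hxy : x ≤ y) :
    n x ≤ n y ∧ a * x - b * n x + c ≤ a * y - b * n y + c :=
  steady_rate_le_and_potential_le hΦ ha hb hxy (hn x hx).1 (hn y (hx.trans hxy)).1 (hn x hx).2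
    (hn y (hx.trans hxy)).2

lemma eq_of_mul_eq_one (hn : IsSteadyRate Φ τ a b c n) (hΦ : Antitone Φ) (ha : 0 ≤ a) (hb : 0 ≤ b)
    {x m : ℝ} (hx : 0 ≤ x) (hm : 0 < m) (h : m * (τ + Φ (a * x - b * m + c)) = 1) : m = n x :=
  le_antisymm (steady_rate_le_and_potential_le hΦ ha hb le_rfl hm (hn x hx).1 h (hn x hx).2).1
    (steady_rate_le_and_potential_le hΦ ha hb le_rfl (hn x hx).1 hm (hn x hx).2 h).1

lemma apply_eq (hn : IsSteadyRate Φ τ a b c n) {x : ℝ} (hx : 0 ≤ x) :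
    Φ (a * x - b * n x + c) = 1 / n x - τ := by
  have := hn x hx
  field_simp [this.1.ne']
  linarith [this.2]

lemma lipschitzOnWith (hn : IsSteadyRate Φ τ a b c n) (hΦ : Antitone Φ) (ha : 0 ≤ a)
    (hb : 0 < b) : LipschitzOnWith (a / b).toNNReal n (Ici 0) := by
  refine LipschitzOnWith.of_le_add_mul' _ fun x hx y hy => ?_
  have hK : 0 ≤ a / b := div_nonneg ha hb.le
  rcases le_total x y with hxy | hyx
  · linarith [(hn.le_and_potential_le hΦ ha hb.le hx hxy).1,
      mul_nonneg hK (dist_nonneg (x := x) (y := y))]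
  · have hpot := (hn.le_and_potential_le hΦ ha hb.le hy hyx).2
    have : n x - n y ≤ a * (x - y) / b := by rw [le_div_iff₀ hb]; linarith
    rw [dist_eq_norm, norm_of_nonneg (sub_nonneg.2 hyx), div_mul_eq_mul_div]
    linarith

lemma mul_sub_le_sub_mul (hn : IsSteadyRate (KV VR VF σ) τ a b c n) (hV : VR ≤ VF) (hσ : 0 < σ)
    (ha : 0 ≤ a) (hb : 0 ≤ b) {x y L : ℝ} (hx : 0 ≤ x) (hxy : x ≤ y) (hyL : y ≤ L) :
    a * n 0 ^ 2 * MV VR VF σ (a * L - b * n L + c) * (y - x) ≤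
      (n y - n x) * (σ + b * n L ^ 2 * MV VR VF σ (a * 0 - b * n 0 + c)) := by
  have hKV {u v : ℝ} (hu : 0 ≤ u) (huv : u ≤ v) :=
    hn.le_and_potential_le (KV_antitone hV hσ) ha hb hu huv
  have hy : 0 ≤ y := hx.trans hxy
  have hnx := (hn x hx).1
  have hny := (hn y hy).1
  have hn₀ := (hn 0 le_rfl).1
  obtain ⟨h0x, -⟩ := hKV le_rfl hx
  obtain ⟨hxy', hvxy⟩ := hKV hx hxy
  obtain ⟨-, hvyL⟩ := hKV hy hyL
  obtain ⟨h0L, hv0L⟩ := hKV le_rfl (hy.trans hyL)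
  set J := MV VR VF σ (a * y - b * n y + c)
  set J₁ := MV VR VF σ (a * L - b * n L + c)
  set J₀ := MV VR VF σ (a * 0 - b * n 0 + c)
  have hJ₁J : J₁ ≤ J := MV_antitone hV hσ hvyL
  have hJ₁J₀ : J₁ ≤ J₀ := MV_antitone hV hσ hv0L
  have hJ₁ : 0 ≤ J₁ := MV_nonneg hV hσ _
  -- `1 / n x - 1 / n y = KV (v x) - KV (v y)` lies above the tangent line of `KV` at `v y`
  have htangent : n x * n y * J * (a * (y - x) - b * (n y - n x)) ≤ σ * (n y - n x) := by
    have := sub_div_mul_MV_le_KV_sub_KV hV hσ (a * x - b * n x + c) (a * y - b * n y + c)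
    rw [hn.apply_eq hx, hn.apply_eq hy] at this
    have h' : (a * (y - x) - b * (n y - n x)) * J / σ ≤ (n y - n x) / (n x * n y) := by
      convert this using 1
      · ring
      · field_simp; ring
    rw [div_le_div_iff₀ hσ (mul_pos hnx hny)] at h'
    linarith
  have hsq : n 0 ^ 2 * J₁ ≤ n x * n y * J := by
    gcongr
    rw [sq]
    exact mul_le_mul h0x (h0x.trans hxy') hn₀.le hnx.le
  have hsqL : n 0 ^ 2 * J₁ ≤ n L ^ 2 * J₀ := by gcongr
  calc a * n 0 ^ 2 * J₁ * (y - x)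
      = n 0 ^ 2 * J₁ * (a * (y - x) - b * (n y - n x)) + b * (n 0 ^ 2 * J₁) * (n y - n x) := by
        ring
    _ ≤ n x * n y * J * (a * (y - x) - b * (n y - n x)) + b * (n L ^ 2 * J₀) * (n y - n x) := by
        gcongr
        linarith
    _ ≤ (n y - n x) * (σ + b * n L ^ 2 * J₀) := by nlinarith

lemma antitoneOn_potential (hn : IsSteadyRate (KV VR VF σ) τ a b c n) (hV : VR ≤ VF) (hσ : 0 < σ)
    (ha : 0 ≤ a) (hb : 0 ≤ b) {e k d s L : ℝ} (hk : 0 ≤ k) (hs : 0 < s)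
    (hA : 0 ≤ -(e / s) + k / s * (a * n 0 ^ 2 * MV VR VF σ (a * L - b * n L + c) /
      (σ + b * n L ^ 2 * MV VR VF σ (a * 0 - b * n 0 + c)))) :
    AntitoneOn (fun x => e * x - k * n x + d) (Icc 0 L) := by
  intro x hx y hy hxy
  set X := a * n 0 ^ 2 * MV VR VF σ (a * L - b * n L + c)
  set D := σ + b * n L ^ 2 * MV VR VF σ (a * 0 - b * n 0 + c)
  have hD : 0 < D := add_pos_of_pos_of_nonneg hσ (mul_nonneg (by positivity) (MV_nonneg hV hσ _))
  replace hA : e * D ≤ k * X := by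
    have h : e / s ≤ k * X / D / s := by linarith [show k / s * (X / D) = k * X / D / s by ring]
    rwa [div_le_div_iff_of_pos_right hs, le_div_iff₀ hD] at h
  have hgrowth := hn.mul_sub_le_sub_mul hV hσ ha hb hx.1 hxy hy.2
  have : e * (y - x) ≤ k * (n y - n x) := by
    refine le_of_mul_le_mul_right ?_ hD
    calc e * (y - x) * D = e * D * (y - x) := by ring
      _ ≤ k * X * (y - x) := mul_le_mul_of_nonneg_right hA (sub_nonneg.2 hxy)
      _ = k * (X * (y - x)) := by ring
      _ ≤ k * ((n y - n x) * D) := mul_le_mul_of_nonneg_left hgrowth hk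
      _ = k * (n y - n x) * D := by ring
  dsimp only
  linarith

end IsSteadyRate

lemma strictMonoOn_mul_add {f : ℝ → ℝ} {s : Set ℝ} {τ : ℝ} (hτ : 0 < τ) (hs : s ⊆ Ioi 0)
    (hf₀ : ∀ x ∈ s, 0 ≤ f x) (hf : MonotoneOn f s) : StrictMonoOn (fun x => x * (τ + f x)) s :=
  fun x hx y hy hxy => by
    have : (0 : ℝ) < x := hs hx
    nlinarith [hf hx hy hxy.le, hf₀ x hx]

lemma existsUnique_mem_Ioo_eq_of_strictMonoOn {F : ℝ → ℝ} {a b y : ℝ} (hab : a ≤ b)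
    (hc : ContinuousOn F (Icc a b)) (hF : StrictMonoOn F (Ioo a b)) (ha : F a < y)
    (hb : y < F b) : ∃! x, x ∈ Ioo a b ∧ F x = y :=
  let ⟨x, hx, hFx⟩ := intermediate_value_Ioo hab hc ⟨ha, hb⟩
  ⟨x, ⟨hx, hFx⟩, fun _ ⟨hz, hFz⟩ => hF.injOn hz hx (hFz.trans hFx.symm)⟩

theorem unique_steady_state_of_A_nonneg_general (VR VF bEE bIE bEI bII τE τI aE aI ν : ℝ)
    (hV : VR < VF) (hbIE : 0 < bIE) (hbEI : 0 < bEI) (hbII : 0 < bII)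
    (hτE : 0 < τE) (haE : 0 < aE) (haI : 0 < aI)
    (NIfun : ℝ → ℝ)
    (hNIfun : ∀ NE : ℝ, 0 ≤ NE → NIfun NE ∈ Set.Ioo 0 (1 / τI) ∧
      NIfun NE * (τI + I2 VR VF bEE bEI bII aI ν NE (NIfun NE)) = 1)
    (hA : 0 ≤ -(bEE / Real.sqrt aE) + bIE / Real.sqrt aE *
      (bEI * (NIfun 0) ^ 2 * Ifun VR VF bEE bEI bII aI ν NIfun (1 / τE) /
        (Real.sqrt aI + bII * (NIfun (1 / τE)) ^ 2 * Ifun VR VF bEE bEI bII aI ν NIfun 0))) :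
    StrictMonoOn (fun x => x * (τE + I1 VR VF bEE bIE aE ν x (NIfun x)))
      (Set.Ioo 0 (1 / τE)) ∧
    ∃! p : ℝ × ℝ, p.1 ∈ Set.Ioo 0 (1 / τE) ∧ p.2 ∈ Set.Ioo 0 (1 / τI) ∧
      p.1 * (τE + I1 VR VF bEE bIE aE ν p.1 p.2) = 1 ∧
      p.2 * (τI + I2 VR VF bEE bEI bII aI ν p.1 p.2) = 1 := by
  have hσE : 0 < √aE := sqrt_pos.2 haE
  have hσI : 0 < √aI := sqrt_pos.2 haI
  have hΦI := KV_antitone hV.le hσI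
  have hL : 0 < 1 / τE := by positivity
  have hn : IsSteadyRate (KV VR VF √aI) τI bEI bII ((bEI - bEE) * ν) NIfun :=
    fun x hx => ⟨(hNIfun x hx).1.1, (hNIfun x hx).2⟩
  rw [Ifun_eq_MV _ _ _ _ _ _ _ _ _ haI, Ifun_eq_MV _ _ _ _ _ _ _ _ _ haI] at hA
  have hE : AntitoneOn (fun x => bEE * x - bIE * NIfun x + (bEE - bEE) * ν) (Icc 0 (1 / τE)) :=
    hn.antitoneOn_potential hV.le hσI hbEI.le hbII.le hbIE.le hσE hA
  have hF : StrictMonoOn (fun x => x * (τE + I1 VR VF bEE bIE aE ν x (NIfun x)))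
      (Ioo 0 (1 / τE)) :=
    strictMonoOn_mul_add hτE (fun _ hx => hx.1) (fun x _ => (KV_pos hV hσE _).le)
      ((KV_antitone hV.le hσE).comp_antitoneOn (hE.mono Ioo_subset_Icc_self))
  have hFcont : ContinuousOn (fun x => x * (τE + I1 VR VF bEE bIE aE ν x (NIfun x)))
      (Icc 0 (1 / τE)) := by
    have : ContinuousOn NIfun (Icc 0 (1 / τE)) :=
      (hn.lipschitzOnWith hΦI hbEI.le hbII).continuousOn.mono Icc_subset_Ici_self
    exact continuousOn_id.mul
      (continuousOn_const.add ((KV_continuous hV.le hσE).comp_continuousOn (by fun_prop)))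
  have hFL : 1 < 1 / τE * (τE + I1 VR VF bEE bIE aE ν (1 / τE) (NIfun (1 / τE))) := by
    rw [mul_add, one_div_mul_cancel hτE.ne']
    exact lt_add_of_pos_right 1 (mul_pos hL (KV_pos hV hσE _))
  obtain ⟨c, ⟨hc, hFc⟩, huniq⟩ :=
    existsUnique_mem_Ioo_eq_of_strictMonoOn hL.le hFcont hF (by simp) hFL
  refine ⟨hF, (c, NIfun c), ⟨hc, (hNIfun c hc.1.le).1, hFc, (hNIfun c hc.1.le).2⟩, ?_⟩
  rintro ⟨p₁, p₂⟩ ⟨hp₁, hp₂, h₁, h₂⟩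
  obtain rfl : p₂ = NIfun p₁ := hn.eq_of_mul_eq_one hΦI hbEI.le hbII.le hp₁.1.le hp₂.1 h₂
  obtain rfl : p₁ = c := huniq p₁ ⟨hp₁, h₁⟩
  rfl

theorem unique_steady_state_of_A_nonneg (VR VF bEE bIE bEI bII τE τI aE aI ν : ℝ)
    (hV : VR < VF) (hbEE : 0 < bEE) (hbIE : 0 < bIE) (hbEI : 0 < bEI) (hbII : 0 < bII)
    (hτE : 0 < τE) (hτI : 0 < τI) (haE : 0 < aE) (haI : 0 < aI) (hν : 0 ≤ ν)
    (NIfun : ℝ → ℝ)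
    (hNIfun : ∀ NE : ℝ, 0 ≤ NE → NIfun NE ∈ Set.Ioo 0 (1 / τI) ∧
      NIfun NE * (τI + I2 VR VF bEE bEI bII aI ν NE (NIfun NE)) = 1)
    (hA : 0 ≤ -(bEE / Real.sqrt aE) + bIE / Real.sqrt aE *
      (bEI * (NIfun 0) ^ 2 * Ifun VR VF bEE bEI bII aI ν NIfun (1 / τE) /
        (Real.sqrt aI + bII * (NIfun (1 / τE)) ^ 2 * Ifun VR VF bEE bEI bII aI ν NIfun 0))) :
    StrictMonoOn (fun x => x * (τE + I1 VR VF bEE bIE aE ν x (NIfun x)))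
      (Set.Ioo 0 (1 / τE)) ∧
    ∃! p : ℝ × ℝ, p.1 ∈ Set.Ioo 0 (1 / τE) ∧ p.2 ∈ Set.Ioo 0 (1 / τI) ∧
      p.1 * (τE + I1 VR VF bEE bIE aE ν p.1 p.2) = 1 ∧
      p.2 * (τI + I2 VR VF bEE bEI bII aI ν p.1 p.2) = 1 :=
  unique_steady_state_of_A_nonneg_general VR VF bEE bIE bEI bII τE τI aE aI ν hV hbIE hbEI hbII hτE
    haE haI NIfun hNIfun hA
end
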